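/- arXiv:2512.23993 — 2 statements merged into one kernel-verified Lean document; each statement's English description precedes it below -/
import Mathlib

section
/- If X, Y ∈ ℝ^N both have pairwise distinct entries (so that the marginal distributions are tie-free), then the Kemeny correlation estimator reduces to Spearman's ρ: ρ̂_κ(X,Y) equals the Pearson correlation coefficient of the rank vectors r(X) and r(Y), where r(X)_k = #{l : X_l ≤ X_k}. -/
open Finset Matrix

/-- The Kemeny score matrix of a vector `X ∈ ℝ^N`. -/
noncomputable def kemenyScore {N : ℕ} (X : Fin N → ℝ) : Matrix (Fin N) (Fin N) ℝ :=
  fun k l => if k = l then 0 else if X l ≤ X k then 1 else -1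

/-- The rank-score vector: row sums of the Kemeny score matrix. -/
noncomputable def rankScore {N : ℕ} (X : Fin N → ℝ) : Fin N → ℝ :=
  fun k => ∑ l, kemenyScore X k l

/-- The centred rank-score vector `underline{X} - m_X 1`. -/
noncomputable def centredRankScore {N : ℕ} (X : Fin N → ℝ) : Fin N → ℝ :=
  fun k => rankScore X k - (∑ l, rankScore X l) / N

/-- The Kemeny correlation estimator `ρ̂_κ(X,Y)`. -/
noncomputable def rhoKemeny {N : ℕ} (X Y : Fin N → ℝ) : ℝ :=
  (∑ k, centredRankScore X k * centredRankScore Y k) /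
    (Real.sqrt (∑ k, centredRankScore X k ^ 2) *
      Real.sqrt (∑ k, centredRankScore Y k ^ 2))

/-- The rank vector: `r(X)_k = #{l : X_l ≤ X_k}`. -/
noncomputable def rankVector {N : ℕ} (X : Fin N → ℝ) : Fin N → ℝ :=
  fun k => ((Finset.univ.filter (fun l => X l ≤ X k)).card : ℝ)

/-- The Pearson correlation coefficient of two vectors. -/
noncomputable def pearson {N : ℕ} (u v : Fin N → ℝ) : ℝ :=
  (∑ k, (u k - (∑ l, u l) / N) * (v k - (∑ l, v l) / N)) /
    (Real.sqrt (∑ k, (u k - (∑ l, u l) / N) ^ 2) *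
      Real.sqrt (∑ k, (v k - (∑ l, v l) / N) ^ 2))

lemma rankScore_eq {N : ℕ} (X : Fin N → ℝ) (k : Fin N) :
    rankScore X k = 2 * rankVector X k - (N + 1) := by
  have h : ∀ l, kemenyScore X k l
      = 2 * (if X l ≤ X k then (1:ℝ) else 0) - 1 - (if l = k then 1 else 0) := by
    intro l
    unfold kemenyScore
    by_cases hlk : l = k
    · subst hlk; norm_num
    · rw [if_neg (fun h => hlk h.symm), if_neg hlk]
      by_cases hle : X l ≤ X k <;> simp [hle] <;> norm_num
  unfold rankScore rankVector
  simp only [h]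
  rw [Finset.sum_sub_distrib, Finset.sum_sub_distrib, Finset.sum_ite_eq' Finset.univ k
      (fun _ => (1:ℝ)), if_pos (Finset.mem_univ k), ← Finset.mul_sum,
    Finset.sum_boole, Finset.sum_const, Finset.card_univ, Fintype.card_fin]
  push_cast
  ring

lemma centredRankScore_eq {N : ℕ} (X : Fin N → ℝ) (k : Fin N) :
    centredRankScore X k
      = 2 * (rankVector X k - (∑ l, rankVector X l) / N) := by
  unfold centredRankScore
  simp only [rankScore_eq]
  rw [Finset.sum_sub_distrib, ← Finset.mul_sum, Finset.sum_const, Finset.card_univ,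
    Fintype.card_fin, sub_div]
  ring_nf
  by_cases hN : (N : ℝ) = 0
  · exact ((Nat.cast_eq_zero.mp hN) ▸ k).elim0
  · field_simp
    ring

/-- on tie-free data, the Kemeny correlation estimator reduces to
Spearman's ρ, i.e. the Pearson correlation of the rank vectors. -/
theorem rhoKemeny_eq_spearman_of_injective
    {N : ℕ} (hN : 2 ≤ N) (X Y : Fin N → ℝ)
    (hX : Function.Injective X) (hY : Function.Injective Y) :
    rhoKemeny X Y = pearson (rankVector X) (rankVector Y) := by
  unfold rhoKemeny pearson
  simp only [centredRankScore_eq]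
  have h4 : ∀ (Z : Fin N → ℝ),
      ∑ k, (2 * (rankVector Z k - (∑ l, rankVector Z l) / N)) ^ 2
        = 4 * ∑ k, (rankVector Z k - (∑ l, rankVector Z l) / N) ^ 2 := by
    intro Z; rw [Finset.mul_sum]; exact Finset.sum_congr rfl fun k _ => by ring
  have hsum : ∑ k, (2 * (rankVector X k - (∑ l, rankVector X l) / N)) *
        (2 * (rankVector Y k - (∑ l, rankVector Y l) / N))
      = 4 * ∑ k, (rankVector X k - (∑ l, rankVector X l) / N) *
        (rankVector Y k - (∑ l, rankVector Y l) / N) := by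
    rw [Finset.mul_sum]; exact Finset.sum_congr rfl fun k _ => by ring
  rw [hsum, h4 X, h4 Y]
  have hs : ∀ t : ℝ, Real.sqrt (4 * t) = 2 * Real.sqrt t := by
    intro t
    rw [Real.sqrt_mul (by norm_num), show (4:ℝ) = 2^2 by norm_num,
      Real.sqrt_sq (by norm_num)]
  rw [hs, hs]
  rw [show (2 * Real.sqrt (∑ k, (rankVector X k - (∑ l, rankVector X l) / ↑N) ^ 2)) *
      (2 * Real.sqrt (∑ k, (rankVector Y k - (∑ l, rankVector Y l) / ↑N) ^ 2))
    = 4 * (Real.sqrt (∑ k, (rankVector X k - (∑ l, rankVector X l) / ↑N) ^ 2) *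
      Real.sqrt (∑ k, (rankVector Y k - (∑ l, rankVector Y l) / ↑N) ^ 2)) by ring,
    mul_div_mul_left _ _ (by norm_num : (4:ℝ) ≠ 0)]
end

section
/- Let X_1, …, X_N be i.i.d. real random variables whose common law is atomless, let Y_1, …, Y_N be i.i.d. real random variables whose common law is atomless, and suppose the vector (X_1,…,X_N) is independent of (Y_1,…,Y_N). Then the Kemeny correlation estimator ρ̂_κ(X,Y) is almost surely well defined and its expectation under this null hypothesis of independence is zero: E[ρ̂_κ(X,Y)] = 0. -/
open Finset Matrix MeasureTheory ProbabilityTheory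

/-!
Independence makes the law of `(X, Y)` the product of the laws of `X` and `Y`, and the law of
the i.i.d. vector `Y` is invariant under permutations of its coordinates, so
`E ρ̂(X, Y) = E ρ̂(X, Y ∘ σ)` for every permutation `σ`. Averaging over `σ` gives zero because
`∑ σ, ρ̂(x, y ∘ σ) = 0` identically: `∑ σ, c_{σ k}` does not depend on `k`, hence vanishes, as
the centred scores `c` sum to zero. Atomlessness makes each sample a.s. pairwise distinct, and
distinct values get distinct rank scores, so the centred score vectors are a.s. nonzero.
-/

lemma abs_sum_mul_le_sqrt_mul_sqrt {ι : Type*} (s : Finset ι) (f g : ι → ℝ) :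
    |∑ i ∈ s, f i * g i| ≤ √(∑ i ∈ s, f i ^ 2) * √(∑ i ∈ s, g i ^ 2) := by
  refine abs_le.2 ⟨?_, Real.sum_mul_le_sqrt_mul_sqrt s f g⟩
  simpa [neg_le, ← sum_neg_distrib] using Real.sum_mul_le_sqrt_mul_sqrt s (-f) g

lemma sum_perm_apply_eq_zero {ι : Type*} [Fintype ι] [DecidableEq ι] {b : ι → ℝ}
    (hb : ∑ i, b i = 0) (k : ι) : ∑ σ : Equiv.Perm ι, b (σ k) = 0 := by
  have hconst : ∀ j, ∑ σ : Equiv.Perm ι, b (σ j) = ∑ σ : Equiv.Perm ι, b (σ k) := fun j =>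
    Fintype.sum_bijective (· * Equiv.swap j k) (Group.mulRight_bijective _) _ _
      fun σ => by simp
  have : Nonempty ι := ⟨k⟩
  have hcard : (Fintype.card ι : ℝ) ≠ 0 := Nat.cast_ne_zero.2 Fintype.card_ne_zero
  have hscaled : (Fintype.card ι : ℝ) * ∑ σ : Equiv.Perm ι, b (σ k) = 0 := by
    rw [← nsmul_eq_mul, ← card_univ, ← sum_const, ← sum_congr rfl fun j _ => hconst j, sum_comm]
    simp [Equiv.sum_comp, hb]
  exact (mul_eq_zero.1 hscaled).resolve_left hcard

section RankScore
variable {N : ℕ}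

lemma kemenyScore_le_kemenyScore {X : Fin N → ℝ} {k j : Fin N} (h : X k < X j) {m : Fin N}
    (hm : m ≠ k) : kemenyScore X k m ≤ kemenyScore X j m := by
  simp only [kemenyScore]
  split_ifs <;> grind

lemma rankScore_lt_rankScore {X : Fin N → ℝ} {k j : Fin N} (h : X k < X j) :
    rankScore X k < rankScore X j := by
  have hkj : k ≠ j := by rintro rfl; exact h.false
  refine sum_lt_sum (fun m _ => ?_) ⟨k, mem_univ k, ?_⟩
  · rcases eq_or_ne m k with rfl | hm
    · simp [kemenyScore, hkj.symm, h.le]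
    · exact kemenyScore_le_kemenyScore h hm
  · simp [kemenyScore, hkj.symm, h.le]

lemma sum_centredRankScore (X : Fin N → ℝ) : ∑ k, centredRankScore X k = 0 := by
  rcases Nat.eq_zero_or_pos N with rfl | hN
  · simp
  · simp only [centredRankScore, sum_sub_distrib, sum_const, card_univ, Fintype.card_fin,
      nsmul_eq_mul]
    field_simp
    ring

lemma centredRankScore_comp_perm (Y : Fin N → ℝ) (σ : Equiv.Perm (Fin N)) :
    centredRankScore (Y ∘ σ) = centredRankScore Y ∘ σ := by
  have hrank : rankScore (Y ∘ σ) = rankScore Y ∘ σ := by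
    ext k
    simp only [rankScore, Function.comp_apply]
    exact Fintype.sum_equiv σ _ _ fun l => by simp [kemenyScore]
  ext k
  simp only [centredRankScore, hrank, Function.comp_apply, Equiv.sum_comp σ (rankScore Y)]

lemma sum_sq_centredRankScore_pos (hN : 2 ≤ N) {X : Fin N → ℝ} (hX : Function.Injective X) :
    0 < ∑ k, centredRankScore X k ^ 2 := by
  have := Fin.nontrivial_iff_two_le.2 hN
  obtain ⟨i, j, hij⟩ := exists_pair_ne (Fin N)
  have hrank : rankScore X i ≠ rankScore X j := by
    rcases (hX.ne hij).lt_or_gt with h | h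
    · exact (rankScore_lt_rankScore h).ne
    · exact (rankScore_lt_rankScore h).ne'
  refine (sum_nonneg fun k _ => sq_nonneg _).lt_of_ne fun h0 => hrank ?_
  have hzero := (sum_eq_zero_iff_of_nonneg fun k _ => sq_nonneg _).1 h0.symm
  have hi := hzero i (mem_univ i)
  have hj := hzero j (mem_univ j)
  simp only [centredRankScore, pow_eq_zero_iff two_ne_zero, sub_eq_zero] at hi hj
  rw [hi, hj]

lemma abs_rhoKemeny_le_one (X Y : Fin N → ℝ) : |rhoKemeny X Y| ≤ 1 := by
  rw [rhoKemeny, abs_div, abs_of_nonneg (mul_nonneg (Real.sqrt_nonneg _) (Real.sqrt_nonneg _))]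
  exact div_le_one_of_le₀ (abs_sum_mul_le_sqrt_mul_sqrt _ _ _) (by positivity)

lemma rhoKemeny_comp_perm (X Y : Fin N → ℝ) (σ : Equiv.Perm (Fin N)) :
    rhoKemeny X (Y ∘ σ) = (∑ k, centredRankScore X k * centredRankScore Y (σ k)) /
      (√(∑ k, centredRankScore X k ^ 2) * √(∑ k, centredRankScore Y k ^ 2)) := by
  simp only [rhoKemeny, centredRankScore_comp_perm, Function.comp_apply,
    Equiv.sum_comp σ fun k => centredRankScore Y k ^ 2]

lemma sum_perm_rhoKemeny_comp (X Y : Fin N → ℝ) :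
    ∑ σ : Equiv.Perm (Fin N), rhoKemeny X (Y ∘ σ) = 0 := by
  simp only [rhoKemeny_comp_perm, ← sum_div, sum_comm (s := univ (α := Equiv.Perm (Fin N))),
    ← mul_sum, sum_perm_apply_eq_zero (sum_centredRankScore Y), mul_zero, sum_const_zero,
    zero_div]

lemma measurable_rhoKemeny :
    Measurable fun p : (Fin N → ℝ) × (Fin N → ℝ) => rhoKemeny p.1 p.2 := by
  have hscore : ∀ k l : Fin N, Measurable fun X : Fin N → ℝ => kemenyScore X k l := by
    intro k l
    simp only [kemenyScore]
    split_ifs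
    · exact measurable_const
    · exact Measurable.ite (measurableSet_le (measurable_pi_apply l) (measurable_pi_apply k))
        measurable_const measurable_const
  have hcentred : ∀ k : Fin N, Measurable fun X : Fin N → ℝ => centredRankScore X k := by
    simp only [centredRankScore, rankScore]
    fun_prop
  unfold rhoKemeny
  fun_prop

end RankScore

section Probability
variable {Ω α : Type*} [MeasurableSpace Ω] [MeasurableSpace α] {P : Measure Ω}

lemma ProbabilityTheory.IndepFun.measure_eq_eq_zero [IsFiniteMeasure P] [MeasurableEq α]
    {f g : Ω → α} (hf : Measurable f) (hg : Measurable g) (hfg : IndepFun f g P)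
    (hg_atom : ∀ a, P {ω | g ω = a} = 0) :
    P {ω | f ω = g ω} = 0 := by
  have hdiag : MeasurableSet (Set.diagonal α) := measurableSet_diagonal
  have hlaw : P.map (fun ω => (f ω, g ω)) = (P.map f).prod (P.map g) :=
    (indepFun_iff_map_prod_eq_prod_map_map hf.aemeasurable hg.aemeasurable).1 hfg
  have hslice : ∀ a, P.map g (Prod.mk a ⁻¹' Set.diagonal α) = 0 := fun a => by
    rw [Measure.map_apply hg (measurable_prodMk_left hdiag)]
    simpa [Set.preimage, eq_comm] using hg_atom a
  calc P {ω | f ω = g ω} = P.map (fun ω => (f ω, g ω)) (Set.diagonal α) := by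
        rw [Measure.map_apply (hf.prodMk hg) hdiag]; rfl
    _ = 0 := by
        rw [hlaw, Measure.measure_prod_null hdiag]
        exact ae_of_all _ hslice

lemma ProbabilityTheory.iIndepFun.ae_injective [IsFiniteMeasure P] [MeasurableEq α]
    {ι : Type*} [Countable ι] {Z : ι → Ω → α} (hZ : ∀ i, Measurable (Z i)) (hind : iIndepFun Z P)
    (hatom : ∀ i a, P {ω | Z i ω = a} = 0) :
    ∀ᵐ ω ∂P, Function.Injective fun i => Z i ω := by
  simp only [Function.Injective, ae_all_iff]
  intro i j
  rcases eq_or_ne i j with rfl | hij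
  · exact ae_of_all _ fun _ _ => rfl
  · filter_upwards [measure_eq_zero_iff_ae_notMem.1 <|
      (hind.indepFun hij).measure_eq_eq_zero (hZ i) (hZ j) (hatom j)] with ω hω heq
    exact absurd heq hω

lemma measurePreserving_comp_perm_pi {ι : Type*} [Fintype ι] {μ : ι → Measure α}
    [∀ i, SigmaFinite (μ i)] (σ : Equiv.Perm ι) (hμ : ∀ i, μ (σ i) = μ i) :
    MeasurePreserving (fun y : ι → α => y ∘ σ) (Measure.pi μ) (Measure.pi μ) := by
  convert (measurePreserving_piCongrLeft (fun i => μ i) σ).symm using 1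
  · rfl
  · simp only [hμ]

lemma ProbabilityTheory.iIndepFun.measurePreserving_comp_perm [IsProbabilityMeasure P]
    {ι : Type*} [Fintype ι] {Y : ι → Ω → α}
    (hY : ∀ i, Measurable (Y i)) (hind : iIndepFun Y P)
    (hid : ∀ i j, IdentDistrib (Y i) (Y j) P P) (σ : Equiv.Perm ι) :
    MeasurePreserving (fun y : ι → α => y ∘ σ) (P.map fun ω i => Y i ω)
      (P.map fun ω i => Y i ω) := by
  rw [(iIndepFun_iff_map_fun_eq_pi_map fun i => (hY i).aemeasurable).1 hind]
  exact measurePreserving_comp_perm_pi σ fun i => (hid (σ i) i).map_eq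

end Probability

lemma integral_rhoKemeny_prod_eq_zero {N : ℕ} {μ ν : Measure (Fin N → ℝ)} [IsFiniteMeasure μ]
    [IsFiniteMeasure ν] (hν : ∀ σ : Equiv.Perm (Fin N), MeasurePreserving (· ∘ σ) ν ν) :
    ∫ p, rhoKemeny p.1 p.2 ∂(μ.prod ν) = 0 := by
  have hσ : ∀ σ : Equiv.Perm (Fin N),
      MeasurePreserving (Prod.map id (· ∘ σ)) (μ.prod ν) (μ.prod ν) :=
    fun σ => (MeasurePreserving.id μ).prod (hν σ)
  have hshift : ∀ σ : Equiv.Perm (Fin N),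
      ∫ p, rhoKemeny p.1 (p.2 ∘ σ) ∂(μ.prod ν) = ∫ p, rhoKemeny p.1 p.2 ∂(μ.prod ν) := by
    intro σ
    have := integral_map (μ := μ.prod ν) (hσ σ).measurable.aemeasurable
      (f := fun p => rhoKemeny p.1 p.2) measurable_rhoKemeny.aestronglyMeasurable
    rwa [(hσ σ).map_eq, eq_comm] at this
  have hint : ∀ σ : Equiv.Perm (Fin N),
      Integrable (fun p : (Fin N → ℝ) × (Fin N → ℝ) => rhoKemeny p.1 (p.2 ∘ σ)) (μ.prod ν) :=
    fun σ => .of_bound (measurable_rhoKemeny.comp (hσ σ).measurable).aestronglyMeasurable 1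
      (ae_of_all _ fun p => abs_rhoKemeny_le_one _ _)
  have hcard : (Fintype.card (Equiv.Perm (Fin N)) : ℝ) ≠ 0 :=
    Nat.cast_ne_zero.2 Fintype.card_ne_zero
  refine (mul_eq_zero.1 ?_).resolve_left hcard
  calc (Fintype.card (Equiv.Perm (Fin N)) : ℝ) * ∫ p, rhoKemeny p.1 p.2 ∂(μ.prod ν)
      = ∑ σ : Equiv.Perm (Fin N), ∫ p, rhoKemeny p.1 (p.2 ∘ σ) ∂(μ.prod ν) := by
        simp [hshift]
    _ = ∫ p, ∑ σ : Equiv.Perm (Fin N), rhoKemeny p.1 (p.2 ∘ σ) ∂(μ.prod ν) :=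
        (integral_finsetSum _ fun σ _ => hint σ).symm
    _ = 0 := by simp [sum_perm_rhoKemeny_comp]

theorem expectation_rhoKemeny_eq_zero_under_independence_general
    {N : ℕ} (hN : 2 ≤ N)
    {Ω : Type*} [MeasurableSpace Ω] (P : Measure Ω) [IsProbabilityMeasure P]
    (X Y : Fin N → Ω → ℝ)
    (hXmeas : ∀ i, Measurable (X i)) (hYmeas : ∀ i, Measurable (Y i))
    (hXindep : iIndepFun X P)
    (hYindep : iIndepFun Y P)
    (hYid : ∀ i j, IdentDistrib (Y i) (Y j) P P)
    (hXatomless : ∀ i, ∀ a : ℝ, P {ω | X i ω = a} = 0)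
    (hYatomless : ∀ i, ∀ a : ℝ, P {ω | Y i ω = a} = 0)
    (hXY : IndepFun (fun ω => fun i => X i ω) (fun ω => fun i => Y i ω) P) :
    (∀ᵐ ω ∂P,
        Real.sqrt (∑ k, centredRankScore (fun i => X i ω) k ^ 2) ≠ 0 ∧
        Real.sqrt (∑ k, centredRankScore (fun i => Y i ω) k ^ 2) ≠ 0) ∧
    ∫ ω, rhoKemeny (fun i => X i ω) (fun i => Y i ω) ∂P = 0 := by
  refine ⟨?_, ?_⟩
  · filter_upwards [hXindep.ae_injective hXmeas hXatomless,
      hYindep.ae_injective hYmeas hYatomless] with ω hX hY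
    exact ⟨(Real.sqrt_pos.2 (sum_sq_centredRankScore_pos hN hX)).ne',
      (Real.sqrt_pos.2 (sum_sq_centredRankScore_pos hN hY)).ne'⟩
  · have hXv : Measurable fun ω i => X i ω := measurable_pi_lambda _ hXmeas
    have hYv : Measurable fun ω i => Y i ω := measurable_pi_lambda _ hYmeas
    have hlaw := (indepFun_iff_map_prod_eq_prod_map_map hXv.aemeasurable hYv.aemeasurable).1 hXY
    rw [← integral_rhoKemeny_prod_eq_zero (μ := P.map fun ω i => X i ω)
      (hYindep.measurePreserving_comp_perm hYmeas hYid), ← hlaw]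
    exact (integral_map (hXv.prodMk hYv).aemeasurable
      measurable_rhoKemeny.aestronglyMeasurable).symm

/-- under independence of two i.i.d. atomless samples, the Kemeny
correlation estimator is almost surely well defined (both denominators are nonzero a.s.)
and has expectation zero. -/
theorem expectation_rhoKemeny_eq_zero_under_independence
    {N : ℕ} (hN : 2 ≤ N)
    {Ω : Type*} [MeasurableSpace Ω] (P : Measure Ω) [IsProbabilityMeasure P]
    (X Y : Fin N → Ω → ℝ)
    (hXmeas : ∀ i, Measurable (X i)) (hYmeas : ∀ i, Measurable (Y i))
    (hXindep : iIndepFun X P)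
    (hYindep : iIndepFun Y P)
    (hXid : ∀ i j, IdentDistrib (X i) (X j) P P)
    (hYid : ∀ i j, IdentDistrib (Y i) (Y j) P P)
    (hXatomless : ∀ i, ∀ a : ℝ, P {ω | X i ω = a} = 0)
    (hYatomless : ∀ i, ∀ a : ℝ, P {ω | Y i ω = a} = 0)
    (hXY : IndepFun (fun ω => fun i => X i ω) (fun ω => fun i => Y i ω) P) :
    (∀ᵐ ω ∂P,
        Real.sqrt (∑ k, centredRankScore (fun i => X i ω) k ^ 2) ≠ 0 ∧
        Real.sqrt (∑ k, centredRankScore (fun i => Y i ω) k ^ 2) ≠ 0) ∧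
    ∫ ω, rhoKemeny (fun i => X i ω) (fun i => Y i ω) ∂P = 0 :=
  expectation_rhoKemeny_eq_zero_under_independence_general hN P X Y hXmeas hYmeas hXindep hYindep
    hYid hXatomless hYatomless hXY
end
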